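/- Let W: 𝒵_Δ → G be a successor weighting of a Brauer graph (Δ, 𝔬, m) with values in a finite abelian group G. Then for each vertex μ ∈ Δ₀ and each equivalence class d ∈ 𝒟_μ, the valency of the vertex μ_d in the covering graph Δ_W equals ord(μ)·val(μ). -/

import Mathlib

/-- A Brauer graph `(Γ, 𝔬, m)`, presented via half-edges: `H` is the (finite, nonempty)
set of half-edges, `σ` is the successor permutation whose cycle at a vertex lists the
incident half-edges in the cyclic order `𝔬` (a loop contributes two half-edges, i.e. is
"listed twice"), `ι` is the fixed-point-free involution pairing the two half-edges of
each edge, `v` assigns to each half-edge its vertex (so the fibres of `v` are exactly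
the cycles of `σ`), the graph is connected, and `m` is the multiplicity function. -/
structure BrauerGraph where
  H : Type
  V : Type
  fintypeH : Fintype H
  decEqH : DecidableEq H
  fintypeV : Fintype V
  decEqV : DecidableEq V
  nonemptyH : Nonempty H
  σ : Equiv.Perm H
  ι : Equiv.Perm H
  ι_invol : ∀ h, ι (ι h) = h
  ι_ne : ∀ h, ι h ≠ h
  v : H → V
  v_surj : Function.Surjective v
  v_eq_iff : ∀ h h', v h = v h' ↔ ∃ n : ℤ, (σ ^ n) h = h'
  connected : ∀ h h' : H, ∃ g ∈ Subgroup.closure ({σ, ι} : Set (Equiv.Perm H)), g h = h'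
  m : V → ℕ
  m_pos : ∀ μ, 0 < m μ

attribute [instance] BrauerGraph.fintypeH BrauerGraph.decEqH
attribute [instance] BrauerGraph.fintypeV BrauerGraph.decEqV

namespace BrauerGraph

variable (Γ : BrauerGraph)

/-- The valency of a vertex: the number of incident half-edges (loops counted twice). -/
noncomputable def val (μ : Γ.V) : ℕ := Nat.card {h : Γ.H // Γ.v h = μ}

end BrauerGraph

/-- A Brauer action of a group `G` on a Brauer graph: a faithful action on half-edges
commuting with the successor permutation (i.e. orientation/successor preserving) and
with the edge involution (i.e. an action by graph automorphisms), and preserving the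
multiplicity function. -/
structure BrauerAction (G : Type) [Group G] (Γ : BrauerGraph) where
  e : G →* Equiv.Perm Γ.H
  faithful : Function.Injective e
  comm_σ : ∀ g h, e g (Γ.σ h) = Γ.σ (e g h)
  comm_ι : ∀ g h, e g (Γ.ι h) = Γ.ι (e g h)
  m_inv : ∀ g h, Γ.m (Γ.v (e g h)) = Γ.m (Γ.v h)

namespace BrauerAction

variable {G : Type} [Group G] {Γ : BrauerGraph}

/-- A free Brauer action: the action is free on the set of edges (loops counted twice,
i.e. on half-edges). -/
def IsFree (A : BrauerAction G Γ) : Prop := ∀ (g : G) (h : Γ.H), A.e g h = h → g = 1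

/-- The orbit equivalence relation of the action on half-edges. -/
def orbSetoid (A : BrauerAction G Γ) : Setoid Γ.H where
  r h h' := ∃ g : G, A.e g h = h'
  iseqv := by
    refine ⟨fun h => ⟨1, by simp⟩, ?_, ?_⟩
    · rintro h h' ⟨g, hg⟩
      exact ⟨g⁻¹, by rw [← hg, ← Equiv.Perm.mul_apply, ← map_mul]; simp⟩
    · rintro a b c ⟨g₁, hg₁⟩ ⟨g₂, hg₂⟩
      exact ⟨g₂ * g₁, by rw [map_mul, Equiv.Perm.mul_apply, hg₁, hg₂]⟩

/-- The orbit equivalence relation of the action restricted to a subset of half-edges. -/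
def subOrbSetoid (A : BrauerAction G Γ) (P : Γ.H → Prop) : Setoid {h : Γ.H // P h} where
  r p q := ∃ g : G, A.e g p.1 = q.1
  iseqv := by
    refine ⟨fun p => ⟨1, by simp⟩, ?_, ?_⟩
    · rintro p q ⟨g, hg⟩
      exact ⟨g⁻¹, by rw [← hg, ← Equiv.Perm.mul_apply, ← map_mul]; simp⟩
    · rintro a b c ⟨g₁, hg₁⟩ ⟨g₂, hg₂⟩
      exact ⟨g₂ * g₁, by rw [map_mul, Equiv.Perm.mul_apply, hg₁, hg₂]⟩

/-- The induced action of `g ∈ G` on vertices (defined via a chosen half-edge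
in the fibre of the vertex). -/
noncomputable def vmap (A : BrauerAction G Γ) (g : G) (μ : Γ.V) : Γ.V :=
  Γ.v (A.e g (Γ.v_surj μ).choose)

/-- The valency, in the orbit graph `Γ/G`, of the orbit vertex `μ̄` of `μ`: the number
of `G`-orbits of half-edges incident with a vertex in the orbit of `μ`. -/
noncomputable def orbVal (A : BrauerAction G Γ) (μ : Γ.V) : ℕ :=
  Nat.card (Quotient (A.subOrbSetoid (fun h => ∃ a : G, Γ.v (A.e a h) = μ)))

/-- The multiplicity function `m̄(μ̄) = val(μ)·m(μ)/val(μ̄)` of the orbit graph,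
expressed on representatives. -/
noncomputable def mbar (A : BrauerAction G Γ) (μ : Γ.V) : ℕ :=
  Γ.val μ * Γ.m μ / A.orbVal μ

end BrauerAction

namespace BrauerGraph

variable (Γ : BrauerGraph) {G : Type} [CommGroup G]

/-- `ω_μ`: the product of the values of a successor weighting `W` over all successor
pairs at the vertex `μ` (a successor pair `(i, σ i)` is identified with the half-edge
`i`). -/
noncomputable def omega (W : Γ.H → G) (μ : Γ.V) : G :=
  ∏ h ∈ Finset.univ.filter (fun h => Γ.v h = μ), W h

/-- `ω(i₁, i_{r+1})`: the product of the weights along the first `r` steps of the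
successor sequence of the half-edge `h`. -/
noncomputable def wpath (W : Γ.H → G) (h : Γ.H) (r : ℕ) : G :=
  ∏ t ∈ Finset.range r, W ((Γ.σ ^ t) h)

/-- The generating relation for the equivalence classes `[i, H_{μ,s}]` defining the
vertices of the Brauer covering graph `Δ_W`: a pair `(i, g)` (representing the pair of
`i` and the coset `H_{v i}·g`) is related to `(σ i, g·W(i))`, and to `(i, g·ω_{v i})`
(the latter identifies representatives of the same coset of `H_μ = ⟨ω_μ⟩`). -/
def covRel (W : Γ.H → G) : Γ.H × G → Γ.H × G → Prop := fun p q =>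
  (q.1 = Γ.σ p.1 ∧ q.2 = p.2 * W p.1) ∨ (q.1 = p.1 ∧ q.2 = p.2 * Γ.omega W (Γ.v p.1))

end BrauerGraph

/-!
The class of `(h₀, g)` is the set of points `(σᵗ h₀, g · ω(h₀, σᵗ h₀) · ω_μ ^ s)`, `μ = v h₀`.
It contains `(h₀, g)` and is closed under the two generating steps `(i, a) ↦ (σ i, a · W i)` and
`(i, a) ↦ (i, a · ω_μ)`; as these are injective self-maps of the finite set `Γ.H × G`, closure
under them already gives closure under their inverses. Going once around the `σ`-cycle at `μ`
multiplies the weight by `ω_μ`, so the point only depends on `t` modulo the cycle length `val μ`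
and on `s` modulo `ord μ`, and it is injective on `[0, val μ) × [0, ord μ)`.
-/

open Function Set

namespace Set.MapsTo

variable {α : Type*} [Finite α] {f : α → α} {s : Set α}

lemma mem_of_apply_mem (hs : MapsTo f s s) (hf : Injective f) {a : α} (ha : f a ∈ s) :
    a ∈ s := by
  obtain ⟨b, hb, hba⟩ := ((s.toFinite.injOn_iff_bijOn_of_mapsTo hs).1 hf.injOn).surjOn ha
  exact hf hba ▸ hb

end Set.MapsTo

namespace Equiv.Perm

variable {α : Type*} (f : Perm α) (x : α)

lemma minimalPeriod_pos [Finite α] : 0 < minimalPeriod f x :=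
  IsPeriodicPt.minimalPeriod_pos (orderOf_pos f) <| by
    rw [IsPeriodicPt, IsFixedPt, iterate_eq_pow, pow_orderOf_eq_one, one_apply]

lemma pow_mod_minimalPeriod_apply (n : ℕ) : (f ^ (n % minimalPeriod f x)) x = (f ^ n) x :=
  iterate_mod_minimalPeriod_eq

lemma pow_minimalPeriod_mul_apply (q : ℕ) : (f ^ (minimalPeriod f x * q)) x = x := by
  rw [← pow_mod_minimalPeriod_apply, Nat.mul_mod_right, pow_zero, one_apply]

lemma injOn_pow_apply_Iio_minimalPeriod :
    (Iio (minimalPeriod f x)).InjOn (fun n : ℕ => (f ^ n) x) :=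
  iterate_injOn_Iio_minimalPeriod

lemma SameCycle.exists_pow_eq_of_lt_minimalPeriod [Finite α] {f : Perm α} {x y : α}
    (h : f.SameCycle x y) : ∃ n < minimalPeriod f x, (f ^ n) x = y := by
  obtain ⟨n, rfl⟩ := h.exists_nat_pow_eq
  exact ⟨n % minimalPeriod f x, Nat.mod_lt _ (minimalPeriod_pos f x),
    pow_mod_minimalPeriod_apply f x n⟩

end Equiv.Perm

namespace BrauerGraph

variable (Γ : BrauerGraph)

lemma v_pow_apply (h : Γ.H) (t : ℕ) : Γ.v ((Γ.σ ^ t) h) = Γ.v h :=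
  ((Γ.v_eq_iff h _).2 ⟨t, by rw [zpow_natCast]⟩).symm

lemma filter_v_eq_image (h : Γ.H) :
    Finset.univ.filter (fun h' => Γ.v h' = Γ.v h) =
      (Finset.range (minimalPeriod Γ.σ h)).image (fun t => (Γ.σ ^ t) h) := by
  ext h'
  simp only [Finset.mem_filter, Finset.mem_univ, true_and, Finset.mem_image, Finset.mem_range]
  constructor
  · intro hv
    exact Equiv.Perm.SameCycle.exists_pow_eq_of_lt_minimalPeriod ((Γ.v_eq_iff h h').1 hv.symm)
  · rintro ⟨t, -, rfl⟩
    exact Γ.v_pow_apply h t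

lemma val_v (h : Γ.H) : Γ.val (Γ.v h) = minimalPeriod Γ.σ h := by
  rw [val, Nat.card_eq_fintype_card, Fintype.card_subtype, filter_v_eq_image,
    Finset.card_image_of_injOn, Finset.card_range]
  simpa only [Finset.coe_range] using Γ.σ.injOn_pow_apply_Iio_minimalPeriod h

variable {G : Type} [CommGroup G] (W : Γ.H → G)

lemma omega_v (h : Γ.H) : Γ.omega W (Γ.v h) = Γ.wpath W h (minimalPeriod Γ.σ h) := by
  rw [omega, filter_v_eq_image, Finset.prod_image, wpath]
  simpa only [Finset.coe_range] using Γ.σ.injOn_pow_apply_Iio_minimalPeriod h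

lemma wpath_zero (h : Γ.H) : Γ.wpath W h 0 = 1 :=
  Finset.prod_range_zero _

lemma wpath_succ (h : Γ.H) (t : ℕ) :
    Γ.wpath W h (t + 1) = Γ.wpath W h t * W ((Γ.σ ^ t) h) :=
  Finset.prod_range_succ _ _

lemma wpath_add (h : Γ.H) (a b : ℕ) :
    Γ.wpath W h (a + b) = Γ.wpath W h a * Γ.wpath W ((Γ.σ ^ a) h) b := by
  rw [wpath, wpath, wpath, Finset.prod_range_add]
  simp only [← Equiv.Perm.mul_apply, ← pow_add, add_comm a]

lemma wpath_minimalPeriod_mul (h : Γ.H) (q : ℕ) :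
    Γ.wpath W h (minimalPeriod Γ.σ h * q) = Γ.omega W (Γ.v h) ^ q := by
  induction q with
  | zero => rw [mul_zero, pow_zero, wpath_zero]
  | succ q ih =>
    rw [Nat.mul_succ, wpath_add, ih, Equiv.Perm.pow_minimalPeriod_mul_apply, ← omega_v,
      pow_succ]

lemma wpath_eq_mul_wpath_mod (h : Γ.H) (t : ℕ) :
    Γ.wpath W h t = Γ.omega W (Γ.v h) ^ (t / minimalPeriod Γ.σ h) *
      Γ.wpath W h (t % minimalPeriod Γ.σ h) := by
  conv_lhs => rw [← Nat.div_add_mod t (minimalPeriod Γ.σ h)]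
  rw [wpath_add, wpath_minimalPeriod_mul, Equiv.Perm.pow_minimalPeriod_mul_apply]

noncomputable def succStep (p : Γ.H × G) : Γ.H × G := (Γ.σ p.1, p.2 * W p.1)

noncomputable def omegaStep (p : Γ.H × G) : Γ.H × G := (p.1, p.2 * Γ.omega W (Γ.v p.1))

lemma covRel_iff {p q : Γ.H × G} :
    Γ.covRel W p q ↔ q = Γ.succStep W p ∨ q = Γ.omegaStep W p := by
  simp only [covRel, succStep, omegaStep, Prod.ext_iff]

lemma succStep_injective : Injective (Γ.succStep W) := by
  rintro ⟨i, a⟩ ⟨j, b⟩ hij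
  simp only [succStep, Prod.mk.injEq] at hij
  obtain ⟨hσ, hW⟩ := hij
  obtain rfl := Γ.σ.injective hσ
  exact Prod.ext rfl (mul_right_cancel hW)

lemma omegaStep_injective : Injective (Γ.omegaStep W) := by
  rintro ⟨i, a⟩ ⟨j, b⟩ hij
  simp only [omegaStep, Prod.mk.injEq] at hij
  obtain ⟨rfl, hω⟩ := hij
  exact Prod.ext rfl (mul_right_cancel hω)

lemma mem_iff_of_eqvGen_covRel [Finite G] {S : Set (Γ.H × G)}
    (hsucc : MapsTo (Γ.succStep W) S S) (homega : MapsTo (Γ.omegaStep W) S S)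
    {p q : Γ.H × G} (hpq : Relation.EqvGen (Γ.covRel W) p q) : p ∈ S ↔ q ∈ S := by
  induction hpq with
  | rel p q hpq =>
    rcases (Γ.covRel_iff W).1 hpq with rfl | rfl
    · exact ⟨(hsucc ·), hsucc.mem_of_apply_mem (Γ.succStep_injective W)⟩
    · exact ⟨(homega ·), homega.mem_of_apply_mem (Γ.omegaStep_injective W)⟩
  | refl => rfl
  | symm _ _ _ ih => exact ih.symm
  | trans _ _ _ _ _ ih₁ ih₂ => exact ih₁.trans ih₂

noncomputable def coverPoint (h₀ : Γ.H) (g : G) (t s : ℕ) : Γ.H × G :=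
  ((Γ.σ ^ t) h₀, g * Γ.wpath W h₀ t * Γ.omega W (Γ.v h₀) ^ s)

variable (h₀ : Γ.H) (g : G)

lemma coverPoint_zero_zero : Γ.coverPoint W h₀ g 0 0 = (h₀, g) := by
  simp only [coverPoint, pow_zero, Equiv.Perm.one_apply, wpath_zero, mul_one]

lemma succStep_coverPoint (t s : ℕ) :
    Γ.succStep W (Γ.coverPoint W h₀ g t s) = Γ.coverPoint W h₀ g (t + 1) s := by
  simp only [succStep, coverPoint, pow_succ', Equiv.Perm.mul_apply, wpath_succ]
  ac_rfl

lemma omegaStep_coverPoint (t s : ℕ) :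
    Γ.omegaStep W (Γ.coverPoint W h₀ g t s) = Γ.coverPoint W h₀ g t (s + 1) := by
  simp only [omegaStep, coverPoint, v_pow_apply, pow_succ, mul_assoc]

lemma eqvGen_covRel_coverPoint (t s : ℕ) :
    Relation.EqvGen (Γ.covRel W) (h₀, g) (Γ.coverPoint W h₀ g t s) := by
  induction s with
  | zero =>
    induction t with
    | zero => rw [coverPoint_zero_zero]; exact .refl _
    | succ t ih =>
      rw [← succStep_coverPoint]
      exact ih.trans _ _ _ (.rel _ _ ((Γ.covRel_iff W).2 (.inl rfl)))
  | succ s ih =>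
    rw [← omegaStep_coverPoint]
    exact ih.trans _ _ _ (.rel _ _ ((Γ.covRel_iff W).2 (.inr rfl)))

lemma eqvGen_covRel_iff_mem_range_coverPoint [Finite G] (p : Γ.H × G) :
    Relation.EqvGen (Γ.covRel W) p (h₀, g) ↔ p ∈ range (uncurry (Γ.coverPoint W h₀ g)) := by
  set S := range (uncurry (Γ.coverPoint W h₀ g))
  refine ⟨fun hp => ?_, ?_⟩
  · have hsucc : MapsTo (Γ.succStep W) S S := by
      rintro _ ⟨⟨t, s⟩, rfl⟩
      exact ⟨(t + 1, s), (Γ.succStep_coverPoint W h₀ g t s).symm⟩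
    have homega : MapsTo (Γ.omegaStep W) S S := by
      rintro _ ⟨⟨t, s⟩, rfl⟩
      exact ⟨(t, s + 1), (Γ.omegaStep_coverPoint W h₀ g t s).symm⟩
    exact (Γ.mem_iff_of_eqvGen_covRel W hsucc homega hp).2
      ⟨(0, 0), Γ.coverPoint_zero_zero W h₀ g⟩
  · rintro ⟨⟨t, s⟩, rfl⟩
    exact (Γ.eqvGen_covRel_coverPoint W h₀ g t s).symm

lemma coverPoint_eq_mod (t s : ℕ) :
    Γ.coverPoint W h₀ g t s = Γ.coverPoint W h₀ g (t % minimalPeriod Γ.σ h₀)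
      ((t / minimalPeriod Γ.σ h₀ + s) % orderOf (Γ.omega W (Γ.v h₀))) := by
  rw [coverPoint, coverPoint, Equiv.Perm.pow_mod_minimalPeriod_apply, pow_mod_orderOf,
    wpath_eq_mul_wpath_mod Γ W h₀ t, pow_add]
  ac_rfl

lemma coverPoint_inj_of_lt {t t' s s' : ℕ} (ht : t < minimalPeriod Γ.σ h₀)
    (ht' : t' < minimalPeriod Γ.σ h₀) (hs : s < orderOf (Γ.omega W (Γ.v h₀)))
    (hs' : s' < orderOf (Γ.omega W (Γ.v h₀)))
    (h : Γ.coverPoint W h₀ g t s = Γ.coverPoint W h₀ g t' s') : t = t' ∧ s = s' := by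
  simp only [coverPoint, Prod.mk.injEq] at h
  obtain rfl := Γ.σ.injOn_pow_apply_Iio_minimalPeriod h₀ ht ht' h.1
  exact ⟨rfl, pow_injOn_Iio_orderOf hs hs' (mul_left_cancel h.2)⟩

end BrauerGraph

/-- For a successor weighting `W : 𝒵_Δ → G` of a Brauer graph with values
in a finite abelian group `G`, the valency of a vertex `μ_d` of the covering graph
`Δ_W` (namely the number of half-edges `(j, a) ∈ Δ₁ × G` incident with it, i.e. lying
in the class `d`) equals `ord(μ)·val(μ)`. -/
theorem covering_valency {G : Type} [CommGroup G] [Fintype G]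
    (Γ : BrauerGraph) (W : Γ.H → G) (h₀ : Γ.H) (g : G) :
    Nat.card {p : Γ.H × G // Relation.EqvGen (Γ.covRel W) p (h₀, g)} =
      orderOf (Γ.omega W (Γ.v h₀)) * Γ.val (Γ.v h₀) := by
  set k := minimalPeriod Γ.σ h₀
  set n := orderOf (Γ.omega W (Γ.v h₀))
  let point : Fin k × Fin n → Γ.H × G := fun ts => Γ.coverPoint W h₀ g ts.1 ts.2
  have hpoint : Injective point := fun ts ts' h => by
    obtain ⟨ht, hs⟩ := Γ.coverPoint_inj_of_lt W h₀ g ts.1.2 ts'.1.2 ts.2.2 ts'.2.2 h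
    exact Prod.ext (Fin.ext ht) (Fin.ext hs)
  have hclass (p : Γ.H × G) : Relation.EqvGen (Γ.covRel W) p (h₀, g) ↔ p ∈ range point := by
    rw [Γ.eqvGen_covRel_iff_mem_range_coverPoint]
    refine ⟨fun ⟨(t, s), hp⟩ => ?_, fun ⟨ts, hp⟩ => ⟨(ts.1, ts.2), hp⟩⟩
    rw [uncurry_apply_pair, Γ.coverPoint_eq_mod] at hp
    exact ⟨(⟨_, Nat.mod_lt _ (Γ.σ.minimalPeriod_pos h₀)⟩,
      ⟨_, Nat.mod_lt _ (orderOf_pos _)⟩), hp⟩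
  rw [Nat.card_congr (Equiv.subtypeEquivRight hclass), Nat.card_range_of_injective hpoint,
    Nat.card_prod, Nat.card_fin, Nat.card_fin, Γ.val_v, mul_comm]
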